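/- arXiv:1809.09817 — 2 statements merged into one kernel-verified Lean document; each statement's English description precedes it below -/
import Mathlib

section
/- Let A ∈ ℝ^{n×n}, B ∈ ℝ^{n×u}, C ∈ ℝ^{y×n}, B₁ ∈ ℝ^{n×w}, C₁ ∈ ℝ^{z×n}, D₁₂ ∈ ℝ^{z×u}, K ∈ ℝ^{u×y}, and let P ∈ 𝕊ₙ, W ∈ 𝕊_z. Define A_cl = A + B·K·C and C_cl = C₁ + D₁₂·K·C. Assume B₁·B₁ᵀ is positive definite and the symmetric 3×3 block matrix [[A_cl·P + P·A_clᵀ + B₁·B₁ᵀ, 0, 0], [0, −W, C_cl·P], [0, P·C_clᵀ, −P]] is negative semidefinite. Then: (i) P is positive definite; (ii) every complex eigenvalue of A_cl has strictly negative real part; and (iii) W − C_cl·P·C_clᵀ is positive semidefinite, so tr(W) ≥ tr(C_cl·P·C_clᵀ). -/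
/-!
Restricting the negative semidefinite block inequality to its diagonal blocks gives
`A_cl P + P A_clᵀ + B₁ B₁ᵀ ⪯ 0`, hence `-(A_cl P + P A_clᵀ) ≻ 0`, together with
`[[W, -C_cl P], [-P C_clᵀ, P]] ⪰ 0`, hence `P ⪰ 0`. If `P v = 0` for some `v ≠ 0`, the Lyapunov
form `vᴴ (A_cl P + P A_clᵀ) v` would vanish, so `P ≻ 0`. For an eigenvector `A_clᴴ x = μ̄ x`
the Lyapunov form equals `2 Re μ · xᴴ P x`, which forces `Re μ < 0`. Finally, since `P ≻ 0`, the
Schur complement of `P` in the second block is `W - C_cl P C_clᵀ ⪰ 0`, and traces are monotone.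
-/

open Matrix
open scoped ComplexOrder

namespace Matrix

section Blocks

variable {m o R : Type*} [Ring R] [PartialOrder R] [StarRing R]

theorem PosSemidef.toBlocks₁₁ {M : Matrix (m ⊕ o) (m ⊕ o) R} (hM : M.PosSemidef) :
    M.toBlocks₁₁.PosSemidef :=
  hM.submatrix Sum.inl

theorem PosSemidef.toBlocks₂₂ {M : Matrix (m ⊕ o) (m ⊕ o) R} (hM : M.PosSemidef) :
    M.toBlocks₂₂.PosSemidef :=
  hM.submatrix Sum.inr

end Blocks

section RCLike

variable {m o 𝕜 : Type*} [Fintype m] [Fintype o] [RCLike 𝕜]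

theorem exists_mulVec_eq_smul_of_mem_spectrum [DecidableEq m] {M : Matrix m m 𝕜} {μ : 𝕜}
    (hμ : μ ∈ spectrum 𝕜 M) : ∃ x ≠ 0, M *ᵥ x = μ • x := by
  rw [← spectrum_toLin', ← Module.End.hasEigenvalue_iff_mem_spectrum] at hμ
  obtain ⟨x, hx⟩ := hμ.exists_hasEigenvector
  exact ⟨x, hx.2, by simpa using hx.apply_eq_smul⟩

theorem PosSemidef.posDef_of_posDef_neg_lyapunov {A P : Matrix m m 𝕜} (hP : P.PosSemidef)
    (hQ : (-(A * P + P * Aᴴ)).PosDef) : P.PosDef := by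
  refine .of_dotProduct_mulVec_pos hP.isHermitian fun x hx => ?_
  refine (hP.dotProduct_mulVec_nonneg x).lt_of_ne fun hx0 => ?_
  have hPx : P *ᵥ x = 0 := (hP.dotProduct_mulVec_zero_iff x).1 hx0.symm
  have hxP : star x ᵥ* P = 0 := by
    rw [← hP.isHermitian.eq, ← star_mulVec, hPx, star_zero]
  have hQx := hQ.dotProduct_mulVec_pos hx
  rw [neg_mulVec, add_mulVec, ← mulVec_mulVec, ← mulVec_mulVec, hPx, mulVec_zero, zero_add,
    dotProduct_neg, dotProduct_mulVec, hxP, zero_dotProduct, neg_zero] at hQx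
  exact hQx.false

theorem re_lt_zero_of_mem_spectrum_of_posDef_neg_lyapunov [DecidableEq m]
    {A P : Matrix m m 𝕜} (hP : P.PosDef) (hQ : (-(A * P + P * Aᴴ)).PosDef) {μ : 𝕜}
    (hμ : μ ∈ spectrum 𝕜 A) : RCLike.re μ < 0 := by
  have hμ' : star μ ∈ spectrum 𝕜 Aᴴ := by
    rwa [← star_eq_conjTranspose, spectrum.map_star, Set.mem_star, star_star]
  obtain ⟨x, hx, hAx⟩ := exists_mulVec_eq_smul_of_mem_spectrum hμ'
  have hxA : star x ᵥ* A = μ • star x := by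
    rw [← conjTranspose_conjTranspose A, ← star_mulVec, hAx, star_smul, star_star]
  set p := star x ⬝ᵥ P *ᵥ x
  have hquad : star x ⬝ᵥ (-(A * P + P * Aᴴ)) *ᵥ x = ((-2 * RCLike.re μ : ℝ) : 𝕜) * p := by
    rw [neg_mulVec, add_mulVec, ← mulVec_mulVec, ← mulVec_mulVec, hAx, dotProduct_neg,
      dotProduct_add, dotProduct_mulVec, hxA, mulVec_smul, dotProduct_smul, smul_dotProduct,
      smul_eq_mul, smul_eq_mul, ← add_mul, RCLike.star_def, RCLike.add_conj]
    push_cast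
    ring
  have hp := RCLike.pos_iff.1 (hP.dotProduct_mulVec_pos hx)
  have hq := RCLike.pos_iff.1 (hQ.dotProduct_mulVec_pos hx)
  rw [hquad, RCLike.re_ofReal_mul] at hq
  nlinarith [hp.1, hq.1]

theorem posSemidef_sub_mul_mul_conjTranspose_of_fromBlocks [DecidableEq m]
    {W : Matrix o o 𝕜} {C : Matrix o m 𝕜} {P : Matrix m m 𝕜} (hP : P.PosDef)
    (h : (fromBlocks W (-(C * P)) (-(P * Cᴴ)) P).PosSemidef) :
    (W - C * P * Cᴴ).PosSemidef := by
  have := hP.isUnit.invertible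
  have hB : -(P * Cᴴ) = (-(C * P))ᴴ := by
    rw [conjTranspose_neg, conjTranspose_mul, hP.isHermitian.eq]
  rw [hB, PosDef.fromBlocks₂₂ _ _ hP, ← hB] at h
  simp only [Matrix.neg_mul, Matrix.mul_neg, neg_neg] at h
  rwa [Matrix.mul_inv_cancel_right_of_invertible, ← Matrix.mul_assoc] at h

end RCLike

section Complexification

theorem conjTranspose_map_ofReal {m o : Type*} (M : Matrix m o ℝ) :
    (M.map (algebraMap ℝ ℂ))ᴴ = Mᴴ.map (algebraMap ℝ ℂ) :=
  (conjTranspose_map _ fun a => by simp).symm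

variable {m : Type*} [Fintype m]

theorem re_star_dotProduct_map_ofReal_mulVec (M : Matrix m m ℝ) (x : m → ℂ) :
    (star x ⬝ᵥ M.map (algebraMap ℝ ℂ) *ᵥ x).re =
      (Complex.re ∘ x) ⬝ᵥ M *ᵥ (Complex.re ∘ x) + (Complex.im ∘ x) ⬝ᵥ M *ᵥ (Complex.im ∘ x) := by
  simp only [dotProduct, mulVec, Pi.star_apply, Finset.mul_sum, Complex.re_sum, map_apply,
    Function.comp_apply, ← Finset.sum_add_distrib]
  refine Finset.sum_congr rfl fun i _ => Finset.sum_congr rfl fun j _ => ?_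
  simp only [RCLike.star_def, Complex.mul_re, Complex.mul_im, Complex.conj_re, Complex.conj_im,
    Complex.coe_algebraMap, Complex.ofReal_re, Complex.ofReal_im]
  ring

theorem PosDef.map_ofReal {M : Matrix m m ℝ} (hM : M.PosDef) :
    (M.map (algebraMap ℝ ℂ)).PosDef := by
  have hH : (M.map (algebraMap ℝ ℂ)).IsHermitian := by
    rw [IsHermitian, conjTranspose_map_ofReal, hM.isHermitian.eq]
  refine .of_dotProduct_mulVec_pos hH fun x hx =>
    RCLike.pos_iff.2 ⟨?_, hH.im_star_dotProduct_mulVec_self x⟩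
  have hre_im : Complex.re ∘ x ≠ 0 ∨ Complex.im ∘ x ≠ 0 := by
    by_contra! h
    exact hx (funext fun i => Complex.ext (congrFun h.1 i) (congrFun h.2 i))
  have hnonneg (v : m → ℝ) : 0 ≤ v ⬝ᵥ M *ᵥ v := by
    simpa only [star_trivial] using hM.posSemidef.dotProduct_mulVec_nonneg v
  have hpos {v : m → ℝ} (hv : v ≠ 0) : 0 < v ⬝ᵥ M *ᵥ v := by
    simpa only [star_trivial] using hM.dotProduct_mulVec_pos hv
  rw [RCLike.re_to_complex, re_star_dotProduct_map_ofReal_mulVec]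
  rcases hre_im with h | h
  · exact add_pos_of_pos_of_nonneg (hpos h) (hnonneg _)
  · exact add_pos_of_nonneg_of_pos (hnonneg _) (hpos h)

end Complexification

end Matrix

theorem h2_bmi_feasibility_general {n u y w z : ℕ}
    (A : Matrix (Fin n) (Fin n) ℝ) (B : Matrix (Fin n) (Fin u) ℝ)
    (C : Matrix (Fin y) (Fin n) ℝ) (B₁ : Matrix (Fin n) (Fin w) ℝ)
    (C₁ : Matrix (Fin z) (Fin n) ℝ) (D₁₂ : Matrix (Fin z) (Fin u) ℝ)
    (K : Matrix (Fin u) (Fin y) ℝ)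
    (P : Matrix (Fin n) (Fin n) ℝ) (W : Matrix (Fin z) (Fin z) ℝ)
    (hB₁ : (B₁ * B₁ᵀ).PosDef)
    (h : (-(fromBlocks
        ((A + B * K * C) * P + P * (A + B * K * C)ᵀ + B₁ * B₁ᵀ) 0 0
        (fromBlocks (-W) ((C₁ + D₁₂ * K * C) * P)
          (P * (C₁ + D₁₂ * K * C)ᵀ) (-P)))).PosSemidef) :
    P.PosDef ∧
    (∀ μ ∈ spectrum ℂ ((A + B * K * C).map (algebraMap ℝ ℂ)), μ.re < 0) ∧
    (W - (C₁ + D₁₂ * K * C) * P * (C₁ + D₁₂ * K * C)ᵀ).PosSemidef ∧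
    ((C₁ + D₁₂ * K * C) * P * (C₁ + D₁₂ * K * C)ᵀ).trace ≤ W.trace := by
  set Acl := A + B * K * C
  set Ccl := C₁ + D₁₂ * K * C
  simp only [fromBlocks_neg, neg_zero, neg_neg] at h
  have hLyap := h.toBlocks₁₁
  have hSchur := h.toBlocks₂₂
  simp only [toBlocks_fromBlocks₁₁, toBlocks_fromBlocks₂₂] at hLyap hSchur
  have hQ : (-(Acl * P + P * Aclᴴ)).PosDef := by
    simpa only [conjTranspose_eq_transpose_of_trivial, neg_add_rev, neg_add_cancel_comm] using
      PosDef.posSemidef_add hLyap hB₁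
  have hP : P.PosDef := hSchur.toBlocks₂₂.posDef_of_posDef_neg_lyapunov hQ
  have hW : (W - Ccl * P * Cclᴴ).PosSemidef :=
    posSemidef_sub_mul_mul_conjTranspose_of_fromBlocks hP
      (by simpa only [conjTranspose_eq_transpose_of_trivial] using hSchur)
  refine ⟨hP, fun μ hμ => ?_, hW, ?_⟩
  · have hQc := hQ.map_ofReal
    rw [Matrix.map_neg _ (map_neg _), Matrix.map_add _ (map_add _), Matrix.map_mul,
      Matrix.map_mul, ← conjTranspose_map_ofReal] at hQc
    exact re_lt_zero_of_mem_spectrum_of_posDef_neg_lyapunov hP.map_ofReal hQc hμ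
  · have := hW.trace_nonneg
    rw [trace_sub, conjTranspose_eq_transpose_of_trivial] at this
    linarith

/-- Proposition 1 (H₂ design): feasibility of the BMI constraint
`[[A_cl P + P A_clᵀ + B₁ B₁ᵀ, 0, 0], [0, -W, C_cl P], [0, P C_clᵀ, -P]] ⪯ 0`
with `B₁ B₁ᵀ ≻ 0` implies that `P ≻ 0`, the closed-loop matrix `A_cl = A + B K C` is Hurwitz,
and `W - C_cl P C_clᵀ ⪰ 0`, whence `tr W ≥ tr (C_cl P C_clᵀ)`. -/
theorem h2_bmi_feasibility {n u y w z : ℕ}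
    (A : Matrix (Fin n) (Fin n) ℝ) (B : Matrix (Fin n) (Fin u) ℝ)
    (C : Matrix (Fin y) (Fin n) ℝ) (B₁ : Matrix (Fin n) (Fin w) ℝ)
    (C₁ : Matrix (Fin z) (Fin n) ℝ) (D₁₂ : Matrix (Fin z) (Fin u) ℝ)
    (K : Matrix (Fin u) (Fin y) ℝ)
    (P : Matrix (Fin n) (Fin n) ℝ) (W : Matrix (Fin z) (Fin z) ℝ)
    (hP : P.IsSymm) (hW : W.IsSymm)
    (hB₁ : (B₁ * B₁ᵀ).PosDef)
    (h : (-(fromBlocks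
        ((A + B * K * C) * P + P * (A + B * K * C)ᵀ + B₁ * B₁ᵀ) 0 0
        (fromBlocks (-W) ((C₁ + D₁₂ * K * C) * P)
          (P * (C₁ + D₁₂ * K * C)ᵀ) (-P)))).PosSemidef) :
    P.PosDef ∧
    (∀ μ ∈ spectrum ℂ ((A + B * K * C).map (algebraMap ℝ ℂ)), μ.re < 0) ∧
    (W - (C₁ + D₁₂ * K * C) * P * (C₁ + D₁₂ * K * C)ᵀ).PosSemidef ∧
    ((C₁ + D₁₂ * K * C) * P * (C₁ + D₁₂ * K * C)ᵀ).trace ≤ W.trace :=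
  h2_bmi_feasibility_general A B C B₁ C₁ D₁₂ K P W hB₁ h
end

section
/- Let A ∈ ℝ^{n×n}, B ∈ ℝ^{n×u}, C ∈ ℝ^{y×n}, B₁ ∈ ℝ^{n×w}, C₁ ∈ ℝ^{z×n}, D₁₁ ∈ ℝ^{z×w}, D₁₂ ∈ ℝ^{z×u}, K ∈ ℝ^{u×y}, Q ∈ 𝕊ₙ, and γ ∈ ℝ. Define A_cl = A + B·K·C and C_cl = C₁ + D₁₂·K·C. Assume B₁·B₁ᵀ is positive definite, D₁₁ ≠ 0, and the symmetric 4×4 block matrix [[−Q, 0, 0, 0], [0, A_cl·Q + Q·A_clᵀ, (C_cl·Q)ᵀ, B₁], [0, C_cl·Q, −γ·I, D₁₁], [0, B₁ᵀ, D₁₁ᵀ, −γ·I]] is negative semidefinite. Then: (i) γ > 0; (ii) A_cl·Q + Q·A_clᵀ + γ⁻¹·B₁·B₁ᵀ is negative semidefinite; (iii) Q is positive definite; and (iv) every complex eigenvalue of A_cl has strictly negative real part. -/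
/-!
A nonzero entry of `D₁₁` is an off-diagonal entry of the negated block matrix between two
diagonal entries `γ`, so a 2×2 principal minor forces `γ > 0`. The Schur complement of `γ I` in the
principal submatrix on the `A_cl Q + Q A_clᵀ` and `B₁` blocks is the matrix of (ii), and adding
`γ⁻¹ B₁ B₁ᵀ ≻ 0` makes `A_cl Q + Q A_clᵀ` negative definite. Then the semidefinite block `Q` is
definite, because a kernel vector of `Q` annihilates the Lyapunov form, and a left eigenvector `w`
of `A_cl` with eigenvalue `μ` gives `w (A_cl Q + Q A_clᵀ) w* = 2 Re μ · w Q w*`, so `Re μ < 0`.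
-/

open Matrix
open scoped ComplexOrder

namespace Matrix

section Real

variable {m n : Type*}

theorem PosSemidef.mul_self_apply_le {M : Matrix n n ℝ} (hM : M.PosSemidef) (i j : n) :
    M i j * M i j ≤ M i i * M j j := by
  have h := (hM.submatrix ![i, j]).det_nonneg
  have hsymm : M j i = M i j := by simpa using hM.isHermitian.apply i j
  simp only [det_fin_two, submatrix_apply, cons_val_zero, cons_val_one, hsymm] at h
  linarith

theorem PosSemidef.diag_pos_of_apply_ne_zero {M : Matrix n n ℝ} (hM : M.PosSemidef) {i j : n}
    (hij : M i j ≠ 0) : 0 < M i i := by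
  refine hM.diag_nonneg.lt_of_ne fun hii => hij ?_
  have := hM.mul_self_apply_le i j
  rw [← hii, zero_mul] at this
  exact mul_self_eq_zero.mp (le_antisymm this (mul_self_nonneg _))

theorem PosSemidef.sub_smul_mul_transpose_of_fromBlocks [Finite m] [Fintype n] [DecidableEq n]
    {γ : ℝ} (hγ : 0 < γ) {A : Matrix m m ℝ} {B : Matrix m n ℝ}
    (h : (fromBlocks A B Bᵀ (γ • 1)).PosSemidef) : (A - γ⁻¹ • (B * Bᵀ)).PosSemidef := by
  have hD : (γ • (1 : Matrix n n ℝ)).PosDef := PosDef.one.smul hγ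
  have : Invertible (γ • (1 : Matrix n n ℝ)) := hD.isUnit.invertible
  have hinv : (γ • (1 : Matrix n n ℝ))⁻¹ = γ⁻¹ • 1 :=
    inv_eq_left_inv (by rw [smul_mul_smul, mul_one, inv_mul_cancel₀ hγ.ne', one_smul])
  simpa [hinv] using (PosDef.fromBlocks₂₂ A B hD).mp (by simpa using h)

end Real

theorem exists_vecMul_eq_smul_of_mem_spectrum {n K : Type*} [Fintype n] [DecidableEq n] [Field K]
    {A : Matrix n n K} {μ : K} (hμ : μ ∈ spectrum K A) : ∃ w ≠ 0, w ᵥ* A = μ • w := by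
  rw [spectrum.mem_iff, Algebra.algebraMap_eq_smul_one, isUnit_iff_isUnit_det,
    isUnit_iff_ne_zero, not_not] at hμ
  obtain ⟨w, hw, hwA⟩ := exists_vecMul_eq_zero_iff.mpr hμ
  rw [vecMul_sub, vecMul_smul, vecMul_one, sub_eq_zero] at hwA
  exact ⟨w, hw, hwA.symm⟩

section Lyapunov

variable {n 𝕜 : Type*} [Fintype n] [RCLike 𝕜]

theorem posDef_of_posSemidef_of_lyapunov {A Q : Matrix n n 𝕜} (hQ : Q.PosSemidef)
    (hL : (-(A * Q + Q * Aᴴ)).PosDef) : Q.PosDef := by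
  refine PosDef.of_dotProduct_mulVec_pos hQ.isHermitian fun x hx => ?_
  refine (hQ.dotProduct_mulVec_nonneg x).lt_of_ne fun h0 => ?_
  have hQx : Q *ᵥ x = 0 := (hQ.dotProduct_mulVec_zero_iff x).mp h0.symm
  have hxQ : star x ᵥ* Q = 0 := by
    have := star_mulVec Q x
    rwa [hQ.isHermitian.eq, hQx, star_zero, eq_comm] at this
  have := hL.dotProduct_mulVec_pos hx
  rw [neg_mulVec, dotProduct_neg, add_mulVec, ← mulVec_mulVec, ← mulVec_mulVec, hQx, mulVec_zero,
    dotProduct_add, dotProduct_mulVec (star x) Q, hxQ, zero_dotProduct, dotProduct_zero, add_zero,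
    neg_zero] at this
  exact lt_irrefl _ this

theorem re_lt_zero_of_mem_spectrum_of_lyapunov [DecidableEq n] {A Q : Matrix n n 𝕜}
    (hQ : Q.PosDef) (hL : (-(A * Q + Q * Aᴴ)).PosDef) {μ : 𝕜} (hμ : μ ∈ spectrum 𝕜 A) :
    RCLike.re μ < 0 := by
  obtain ⟨w, hw, hwA⟩ := exists_vecMul_eq_smul_of_mem_spectrum hμ
  set x := star w
  have hx : x ≠ 0 := star_ne_zero.mpr hw
  have hAx : Aᴴ *ᵥ x = star μ • x := by
    rw [← star_vecMul, hwA, star_smul]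
  have hform : star x ⬝ᵥ (A * Q + Q * Aᴴ) *ᵥ x = (μ + star μ) * (star x ⬝ᵥ Q *ᵥ x) := by
    rw [add_mulVec, ← mulVec_mulVec, ← mulVec_mulVec, hAx, dotProduct_add, dotProduct_mulVec,
      star_star, hwA, mulVec_smul, dotProduct_smul, smul_dotProduct, ← star_star w]
    simp only [smul_eq_mul]
    ring
  have hneg := hL.re_dotProduct_pos hx
  have hq := hQ.re_dotProduct_pos hx
  rw [neg_mulVec, dotProduct_neg, map_neg, hform, RCLike.star_def, RCLike.add_conj,
    ← RCLike.ofReal_ofNat, ← RCLike.ofReal_mul, RCLike.re_ofReal_mul] at hneg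
  nlinarith

end Lyapunov

section Complexification

variable {n : Type*}

theorem re_star_dotProduct_map_mulVec [Fintype n] (M : Matrix n n ℝ) (v : n → ℂ) :
    (star v ⬝ᵥ M.map (algebraMap ℝ ℂ) *ᵥ v).re
      = (fun i => (v i).re) ⬝ᵥ M *ᵥ (fun i => (v i).re)
        + (fun i => (v i).im) ⬝ᵥ M *ᵥ (fun i => (v i).im) := by
  simp only [dotProduct, mulVec, map_apply, Pi.star_apply, Complex.star_def, Complex.re_sum,
    Finset.mul_sum, ← Finset.sum_add_distrib, Complex.mul_re, Complex.mul_im, Complex.conj_re,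
    Complex.conj_im, Complex.coe_algebraMap, Complex.ofReal_re, Complex.ofReal_im]
  refine Finset.sum_congr rfl fun i _ => Finset.sum_congr rfl fun j _ => ?_
  ring

theorem conjTranspose_map_algebraMap (M : Matrix n n ℝ) :
    (M.map (algebraMap ℝ ℂ))ᴴ = Mᵀ.map (algebraMap ℝ ℂ) := by
  ext i j
  simp

theorem PosDef.map_algebraMap_complex [Fintype n] {M : Matrix n n ℝ} (hM : M.PosDef) :
    (M.map (algebraMap ℝ ℂ)).PosDef := by
  have hH : (M.map (algebraMap ℝ ℂ)).IsHermitian := by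
    rw [IsHermitian, conjTranspose_map_algebraMap, ← conjTranspose_eq_transpose_of_trivial,
      hM.isHermitian.eq]
  refine PosDef.of_dotProduct_mulVec_pos hH fun v hv => Complex.pos_iff.mpr ⟨?_, ?_⟩
  · have hnonneg (x : n → ℝ) : 0 ≤ x ⬝ᵥ M *ᵥ x := by
      simpa using hM.posSemidef.dotProduct_mulVec_nonneg x
    have hpos {x : n → ℝ} (hx : x ≠ 0) : 0 < x ⬝ᵥ M *ᵥ x := by
      simpa using hM.dotProduct_mulVec_pos hx
    rw [re_star_dotProduct_map_mulVec]
    by_cases hre : (fun i => (v i).re) = 0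
    · have him : (fun i => (v i).im) ≠ 0 := fun him =>
        hv (funext fun i => Complex.ext (congrFun hre i) (congrFun him i))
      exact add_pos_of_nonneg_of_pos (hnonneg _) (hpos him)
    · exact add_pos_of_pos_of_nonneg (hpos hre) (hnonneg _)
  · exact (hH.im_star_dotProduct_mulVec_self v).symm

theorem re_lt_zero_of_mem_spectrum_map_of_lyapunov [Fintype n] [DecidableEq n]
    {A Q : Matrix n n ℝ} (hQ : Q.PosDef) (hL : (-(A * Q + Q * Aᵀ)).PosDef) {μ : ℂ}
    (hμ : μ ∈ spectrum ℂ (A.map (algebraMap ℝ ℂ))) : μ.re < 0 := by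
  refine re_lt_zero_of_mem_spectrum_of_lyapunov hQ.map_algebraMap_complex ?_ hμ
  rw [conjTranspose_map_algebraMap, ← Matrix.map_mul, ← Matrix.map_mul,
    ← Matrix.map_add _ (map_add _), ← Matrix.map_neg _ (map_neg _)]
  exact hL.map_algebraMap_complex

end Complexification

end Matrix

theorem hinf_bmi_feasibility_general {n u y w z : ℕ}
    (A : Matrix (Fin n) (Fin n) ℝ) (B : Matrix (Fin n) (Fin u) ℝ)
    (C : Matrix (Fin y) (Fin n) ℝ) (B₁ : Matrix (Fin n) (Fin w) ℝ)
    (C₁ : Matrix (Fin z) (Fin n) ℝ) (D₁₁ : Matrix (Fin z) (Fin w) ℝ)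
    (D₁₂ : Matrix (Fin z) (Fin u) ℝ) (K : Matrix (Fin u) (Fin y) ℝ)
    (Q : Matrix (Fin n) (Fin n) ℝ) (γ : ℝ)
    (hB₁ : (B₁ * B₁ᵀ).PosDef) (hD₁₁ : D₁₁ ≠ 0)
    (h : (-(fromBlocks
        (-Q) 0 0
        (fromBlocks
          ((A + B * K * C) * Q + Q * (A + B * K * C)ᵀ)
          (fromCols ((C₁ + D₁₂ * K * C) * Q)ᵀ B₁)
          (fromRows ((C₁ + D₁₂ * K * C) * Q) B₁ᵀ)
          (fromBlocks (-(γ • (1 : Matrix (Fin z) (Fin z) ℝ))) D₁₁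
            D₁₁ᵀ (-(γ • (1 : Matrix (Fin w) (Fin w) ℝ))))))).PosSemidef) :
    0 < γ ∧
    (-((A + B * K * C) * Q + Q * (A + B * K * C)ᵀ + γ⁻¹ • (B₁ * B₁ᵀ))).PosSemidef ∧
    Q.PosDef ∧
    (∀ μ ∈ spectrum ℂ ((A + B * K * C).map (algebraMap ℝ ℂ)), μ.re < 0) := by
  set Acl := A + B * K * C
  set S := Acl * Q + Q * Aclᵀ
  obtain ⟨i, j, hij⟩ : ∃ i j, D₁₁ i j ≠ 0 := by
    by_contra! h0
    exact hD₁₁ (Matrix.ext h0)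
  have hγ : 0 < γ := by
    simpa using h.diag_pos_of_apply_ne_zero (i := .inr (.inr (.inl i)))
      (j := .inr (.inr (.inr j))) (by simpa using hij)
  have hQ : Q.PosSemidef := by
    convert h.submatrix Sum.inl using 1
    ext
    simp
  have hSB : (fromBlocks (-S) (-B₁) (-B₁)ᵀ (γ • 1)).PosSemidef := by
    convert h.submatrix (Sum.elim (Sum.inr ∘ Sum.inl) (Sum.inr ∘ Sum.inr ∘ Sum.inr)) using 1
    ext (i | i) (j | j) <;> simp
  have hii : (-(S + γ⁻¹ • (B₁ * B₁ᵀ))).PosSemidef := by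
    have := hSB.sub_smul_mul_transpose_of_fromBlocks hγ
    rwa [transpose_neg, Matrix.neg_mul, Matrix.mul_neg, neg_neg, sub_eq_add_neg, ← neg_add] at this
  have hS : (-S).PosDef := by
    simpa using PosDef.posSemidef_add hii (hB₁.smul (inv_pos.mpr hγ))
  have hQpd : Q.PosDef :=
    posDef_of_posSemidef_of_lyapunov hQ (by rwa [conjTranspose_eq_transpose_of_trivial])
  exact ⟨hγ, hii, hQpd, fun μ hμ => re_lt_zero_of_mem_spectrum_map_of_lyapunov hQpd hS hμ⟩

/-- Proposition 2 (H∞ design): feasibility of the BMI constraint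
`[[-Q, 0, 0, 0], [0, A_cl Q + Q A_clᵀ, (C_cl Q)ᵀ, B₁], [0, C_cl Q, -γ I, D₁₁], [0, B₁ᵀ, D₁₁ᵀ, -γ I]] ⪯ 0`
with `B₁ B₁ᵀ ≻ 0` and `D₁₁ ≠ 0` implies `γ > 0`,
`A_cl Q + Q A_clᵀ + γ⁻¹ B₁ B₁ᵀ ⪯ 0`, `Q ≻ 0`, and the closed-loop matrix
`A_cl = A + B K C` is Hurwitz. -/
theorem hinf_bmi_feasibility {n u y w z : ℕ}
    (A : Matrix (Fin n) (Fin n) ℝ) (B : Matrix (Fin n) (Fin u) ℝ)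
    (C : Matrix (Fin y) (Fin n) ℝ) (B₁ : Matrix (Fin n) (Fin w) ℝ)
    (C₁ : Matrix (Fin z) (Fin n) ℝ) (D₁₁ : Matrix (Fin z) (Fin w) ℝ)
    (D₁₂ : Matrix (Fin z) (Fin u) ℝ) (K : Matrix (Fin u) (Fin y) ℝ)
    (Q : Matrix (Fin n) (Fin n) ℝ) (γ : ℝ)
    (hQ : Q.IsSymm) (hB₁ : (B₁ * B₁ᵀ).PosDef) (hD₁₁ : D₁₁ ≠ 0)
    (h : (-(fromBlocks
        (-Q) 0 0
        (fromBlocks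
          ((A + B * K * C) * Q + Q * (A + B * K * C)ᵀ)
          (fromCols ((C₁ + D₁₂ * K * C) * Q)ᵀ B₁)
          (fromRows ((C₁ + D₁₂ * K * C) * Q) B₁ᵀ)
          (fromBlocks (-(γ • (1 : Matrix (Fin z) (Fin z) ℝ))) D₁₁
            D₁₁ᵀ (-(γ • (1 : Matrix (Fin w) (Fin w) ℝ))))))).PosSemidef) :
    0 < γ ∧
    (-((A + B * K * C) * Q + Q * (A + B * K * C)ᵀ + γ⁻¹ • (B₁ * B₁ᵀ))).PosSemidef ∧
    Q.PosDef ∧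
    (∀ μ ∈ spectrum ℂ ((A + B * K * C).map (algebraMap ℝ ℂ)), μ.re < 0) :=
  hinf_bmi_feasibility_general A B C B₁ C₁ D₁₁ D₁₂ K Q γ hB₁ hD₁₁ h
end
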